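/- If x₁, x₂, y₁, y₂ are numbers with x₁ < x₂ and y₁ < y₂, then x₁·y₂ + x₂·y₁ < x₁·y₁ + x₂·y₂. In particular, if y > 0 is a number, then x₁ < x₂ implies x₁·y < x₂·y. -/

import Mathlib

universe u

noncomputable section

namespace SetTheory

/-- Pre-games, as in the older Mathlib's `SetTheory.PGame` (removed from Mathlib since). -/
inductive PGame : Type (u + 1)
  | mk : ∀ α β : Type u, (α → PGame) → (β → PGame) → PGame

namespace PGame

/-- The pair (`x ≤ y`, `x ⧏ y`), defined by simultaneous recursion. -/
def leLF : PGame.{u} → PGame.{u} → Prop × Prop := by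
  intro x
  induction x with
  | mk xl xr xL xR IHxl IHxr =>
    intro y
    induction y with
    | mk yl yr yL yR IHyl IHyr =>
      exact ((∀ i, (IHxl i (mk yl yr yL yR)).2) ∧ (∀ j, (IHyr j).2),
        (∃ i, (IHyl i).1) ∨ (∃ j, (IHxr j (mk yl yr yL yR)).1))

instance : LE PGame.{u} := ⟨fun x y => (leLF x y).1⟩

instance : LT PGame.{u} := ⟨fun x y => x ≤ y ∧ ¬y ≤ x⟩

/-- A pre-game is numeric if all its options are numeric and every left option is
less than every right option. -/
def Numeric : PGame.{u} → Prop
  | mk _ _ L R => (∀ i j, L i < R j) ∧ (∀ i, Numeric (L i)) ∧ ∀ j, Numeric (R j)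

instance : Zero PGame.{u} := ⟨mk PEmpty PEmpty PEmpty.elim PEmpty.elim⟩

/-- Negation of a pre-game. -/
def neg : PGame.{u} → PGame.{u}
  | mk xl xr xL xR => mk xr xl (fun j => neg (xR j)) (fun i => neg (xL i))

instance : Neg PGame.{u} := ⟨neg⟩

instance : Add PGame.{u} := ⟨fun x y => by
  induction x generalizing y with
  | mk xl xr xL xR IHxl IHxr =>
    induction y with
    | mk yl yr yL yR IHyl IHyr =>
      exact mk (xl ⊕ yl) (xr ⊕ yr)
        (Sum.rec (fun i => IHxl i (mk yl yr yL yR)) (fun i => IHyl i))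
        (Sum.rec (fun i => IHxr i (mk yl yr yL yR)) (fun i => IHyr i))⟩

instance : Sub PGame.{u} := ⟨fun x y => x + -y⟩

instance : Mul PGame.{u} := ⟨fun x y => by
  induction x generalizing y with
  | mk xl xr xL xR IHxl IHxr =>
    induction y with
    | mk yl yr yL yR IHyl IHyr =>
      exact mk ((xl × yl) ⊕ (xr × yr)) ((xl × yr) ⊕ (xr × yl))
        (Sum.rec (fun p => IHxl p.1 (mk yl yr yL yR) + IHyl p.2 - IHxl p.1 (yL p.2))
          (fun p => IHxr p.1 (mk yl yr yL yR) + IHyr p.2 - IHxr p.1 (yR p.2)))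
        (Sum.rec (fun p => IHxl p.1 (mk yl yr yL yR) + IHyr p.2 - IHxl p.1 (yR p.2))
          (fun p => IHxr p.1 (mk yl yr yL yR) + IHyl p.2 - IHxr p.1 (yL p.2)))⟩

end PGame

end SetTheory

end

open SetTheory PGame

/-!
In the quotient `Game` of pre-games by `x ≤ y ∧ y ≤ x`, an ordered abelian group, let
`crossDiff x₁ x₂ y₁ y₂ = x₁y₁ + x₂y₂ - x₁y₂ - x₂y₁`, formally `(x₂ - x₁)(y₂ - y₁)`. The options of
`x * y` are `x * y ∓ crossDiff a x b y` for options `a`, `b` of `x`, `y`, so `x * y` lying strictly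
between its options says that cross differences against options are positive; and `crossDiff` is
additive in each pair of arguments.

Following Schleicher and Stoll, that `x * y` is a number and that `MulCompat x₁ x₂ y` holds are
proved together for numbers, by well-founded induction on the multiset of arguments, where one
argument may be replaced by several of its options. Two options of `x * y` are compared by going
around a rectangle of cross differences, one positive and one nonnegative, choosing the way round
by the totality of the order on numbers. Finally `y₁ < y₂` puts an option of `y₂` above `y₁` or an
option of `y₁` below `y₂`, which gives `0 < crossDiff x₁ x₂ y₁ y₂` by induction on `y₁` and `y₂`;
`y₁ = 0` is strict monotonicity.
-/

noncomputable section

namespace SetTheory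

namespace PGame

def LeftMoves : PGame.{u} → Type u
  | mk l _ _ _ => l

def RightMoves : PGame.{u} → Type u
  | mk _ r _ _ => r

def moveLeft : (x : PGame.{u}) → x.LeftMoves → PGame.{u}
  | mk _ _ L _ => L

def moveRight : (x : PGame.{u}) → x.RightMoves → PGame.{u}
  | mk _ _ _ R => R

theorem mk_le_mk_iff {xl xr yl yr : Type u} {xL : xl → PGame.{u}} {xR : xr → PGame.{u}}
    {yL : yl → PGame.{u}} {yR : yr → PGame.{u}} :
    mk xl xr xL xR ≤ mk yl yr yL yR ↔
      (∀ i, (leLF (xL i) (mk yl yr yL yR)).2) ∧ ∀ j, (leLF (mk xl xr xL xR) (yR j)).2 :=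
  Iff.rfl

theorem leLF_mk_mk_snd_iff {xl xr yl yr : Type u} {xL : xl → PGame.{u}} {xR : xr → PGame.{u}}
    {yL : yl → PGame.{u}} {yR : yr → PGame.{u}} :
    (leLF (mk xl xr xL xR) (mk yl yr yL yR)).2 ↔
      (∃ i, mk xl xr xL xR ≤ yL i) ∨ ∃ j, xR j ≤ mk yl yr yL yR :=
  Iff.rfl

theorem leLF_snd_iff_not_le (x y : PGame.{u}) :
    ((leLF x y).2 ↔ ¬ y ≤ x) ∧ ((leLF y x).2 ↔ ¬ x ≤ y) := by
  induction x generalizing y with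
  | mk xl xr xL xR ihxl ihxr =>
    induction y with
    | mk yl yr yL yR ihyl ihyr =>
      simp only [leLF_mk_mk_snd_iff, mk_le_mk_iff, not_and_or, not_forall]
      constructor
      · exact or_congr (exists_congr fun i => by rw [(ihyl i).2, not_not])
          (exists_congr fun j => by rw [(ihxr j _).2, not_not])
      · exact or_congr (exists_congr fun i => by rw [(ihxl i _).1, not_not])
          (exists_congr fun j => by rw [(ihyr j).1, not_not])

theorem le_iff_forall_not_le {x y : PGame.{u}} :
    x ≤ y ↔ (∀ i, ¬ y ≤ x.moveLeft i) ∧ ∀ j, ¬ y.moveRight j ≤ x := by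
  cases x; cases y
  rw [mk_le_mk_iff]
  exact and_congr (forall_congr' fun _ => (leLF_snd_iff_not_le _ _).1)
    (forall_congr' fun _ => (leLF_snd_iff_not_le _ _).1)

theorem not_le_iff_exists_le {x y : PGame.{u}} :
    ¬ y ≤ x ↔ (∃ i, x ≤ y.moveLeft i) ∨ ∃ j, x.moveRight j ≤ y := by
  cases x; cases y
  rw [← (leLF_snd_iff_not_le _ _).1]
  exact leLF_mk_mk_snd_iff

-- The three rotations are proved together so that each is available as induction hypothesis.
theorem le_trans_cyclic (x y z : PGame.{u}) :
    (x ≤ y → y ≤ z → x ≤ z) ∧ (y ≤ z → z ≤ x → y ≤ x) ∧ (z ≤ x → x ≤ y → z ≤ y) := by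
  induction x generalizing y z with
  | mk xl xr xL xR ihxl ihxr =>
    induction y generalizing z with
    | mk yl yr yL yR ihyl ihyr =>
      induction z with
      | mk zl zr zL zR ihzl ihzr =>
        refine ⟨fun h₁ h₂ => ?_, fun h₁ h₂ => ?_, fun h₁ h₂ => ?_⟩ <;>
          have h₁' := le_iff_forall_not_le.1 h₁ <;> have h₂' := le_iff_forall_not_le.1 h₂ <;>
          refine le_iff_forall_not_le.2 ⟨fun i h => h₁'.1 i ?_, fun j h => h₂'.2 j ?_⟩
        exacts [(ihxl i _ _).2.1 h₂ h, (ihzr j).2.2 h h₁, (ihyl i _).2.2 h₂ h, (ihxr j _ _).1 h h₁,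
          (ihzl i).1 h₂ h, (ihyr j _).2.1 h h₁]

instance : Preorder PGame.{u} where
  le_refl x := by
    induction x with
    | mk xl xr xL xR ihl ihr =>
      exact le_iff_forall_not_le.2 ⟨fun i => not_le_iff_exists_le.2 (.inl ⟨i, ihl i⟩),
        fun j => not_le_iff_exists_le.2 (.inr ⟨j, ihr j⟩)⟩
  le_trans x y z := (le_trans_cyclic x y z).1
  lt_iff_le_not_ge _ _ := Iff.rfl

theorem not_le_moveLeft (x : PGame.{u}) (i : x.LeftMoves) : ¬ x ≤ x.moveLeft i :=
  not_le_iff_exists_le.2 (.inl ⟨i, le_rfl⟩)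

theorem not_moveRight_le (x : PGame.{u}) (j : x.RightMoves) : ¬ x.moveRight j ≤ x :=
  not_le_iff_exists_le.2 (.inr ⟨j, le_rfl⟩)

theorem le_of_forall_lt {x y : PGame.{u}} (hl : ∀ i, x.moveLeft i < y)
    (hr : ∀ j, x < y.moveRight j) : x ≤ y :=
  le_iff_forall_not_le.2 ⟨fun i => (hl i).not_ge, fun j => (hr j).not_ge⟩

theorem le_of_forall_exists_le {x y : PGame.{u}}
    (hl : ∀ i, ∃ i', x.moveLeft i ≤ y.moveLeft i')
    (hr : ∀ j, ∃ j', x.moveRight j' ≤ y.moveRight j) :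
    x ≤ y := by
  refine le_iff_forall_not_le.2 ⟨fun i h => ?_, fun j h => ?_⟩
  · obtain ⟨i', hi⟩ := hl i
    exact not_le_moveLeft y i' (h.trans hi)
  · obtain ⟨j', hj⟩ := hr j
    exact not_moveRight_le x j' (hj.trans h)

theorem add_eq (x y : PGame.{u}) : x + y = mk (x.LeftMoves ⊕ y.LeftMoves)
    (x.RightMoves ⊕ y.RightMoves)
    (Sum.elim (fun i => x.moveLeft i + y) (fun k => x + y.moveLeft k))
    (Sum.elim (fun j => x.moveRight j + y) (fun k => x + y.moveRight k)) := by
  cases x; cases y; rfl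

theorem not_le_add_of_moveRight_add_le {a b c : PGame.{u}} (j : a.RightMoves)
    (h : a.moveRight j + b ≤ c) : ¬ c ≤ a + b := by
  rw [add_eq a b]
  exact not_le_iff_exists_le.2 (.inr ⟨.inl j, h⟩)

theorem not_le_add_of_add_moveRight_le {a b c : PGame.{u}} (j : b.RightMoves)
    (h : a + b.moveRight j ≤ c) : ¬ c ≤ a + b := by
  rw [add_eq a b]
  exact not_le_iff_exists_le.2 (.inr ⟨.inr j, h⟩)

theorem not_add_le_of_le_moveLeft_add {a b c : PGame.{u}} (i : a.LeftMoves)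
    (h : c ≤ a.moveLeft i + b) : ¬ a + b ≤ c := by
  rw [add_eq a b]
  exact not_le_iff_exists_le.2 (.inl ⟨.inl i, h⟩)

theorem not_add_le_of_le_add_moveLeft {a b c : PGame.{u}} (i : b.LeftMoves)
    (h : c ≤ a + b.moveLeft i) : ¬ a + b ≤ c := by
  rw [add_eq a b]
  exact not_le_iff_exists_le.2 (.inl ⟨.inr i, h⟩)

theorem add_le_add_right_and_not_le (y : PGame.{u}) : ∀ x x' : PGame.{u},
    (x ≤ x' → x + y ≤ x' + y) ∧ (¬ x' ≤ x → ¬ x' + y ≤ x + y) := by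
  induction y with
  | mk yl yr yL yR ihyl ihyr =>
    intro x
    induction x with
    | mk xl xr xL xR ihxl ihxr =>
      intro x'
      induction x' with
      | mk zl zr zL zR ihzl ihzr =>
        refine ⟨fun h => le_iff_forall_not_le.2 ⟨?_, ?_⟩, fun h => ?_⟩
        · rintro (i | k)
          · exact (ihxl i _).2 ((le_iff_forall_not_le.1 h).1 i)
          · exact fun h' => not_le_moveLeft (mk zl zr zL zR + mk yl yr yL yR) (Sum.inr k)
              (h'.trans ((ihyl k _ _).1 h))
        · rintro (j | k)
          · exact (ihzr j).2 ((le_iff_forall_not_le.1 h).2 j)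
          · exact fun h' => not_moveRight_le (mk xl xr xL xR + mk yl yr yL yR) (Sum.inr k)
              (((ihyr k _ _).1 h).trans h')
        · rcases not_le_iff_exists_le.1 h with ⟨i, hi⟩ | ⟨j, hj⟩
          · exact fun h' => not_le_moveLeft (mk zl zr zL zR + mk yl yr yL yR) (Sum.inl i)
              (h'.trans ((ihzl i).1 hi))
          · exact fun h' => not_moveRight_le (mk xl xr xL xR + mk yl yr yL yR) (Sum.inl j)
              (((ihxr j _).1 hj).trans h')

theorem add_comm_le (x y : PGame.{u}) : x + y ≤ y + x := by
  induction x generalizing y with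
  | mk xl xr xL xR ihxl ihxr =>
    induction y with
    | mk yl yr yL yR ihyl ihyr =>
      refine le_of_forall_exists_le ?_ ?_
      · rintro (i | k)
        exacts [⟨.inr i, ihxl i _⟩, ⟨.inl k, ihyl k⟩]
      · rintro (k | j)
        exacts [⟨.inr k, ihyr k⟩, ⟨.inl j, ihxr j _⟩]

instance : AddRightMono PGame.{u} :=
  ⟨fun y _ _ h => (add_le_add_right_and_not_le y _ _).1 h⟩

instance : AddLeftMono PGame.{u} :=
  ⟨fun x _ _ h => ((add_comm_le x _).trans (add_le_add_left h x)).trans (add_comm_le _ x)⟩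

theorem zero_add_le_and_ge (x : PGame.{u}) : 0 + x ≤ x ∧ x ≤ 0 + x := by
  induction x with
  | mk xl xr xL xR ihl ihr =>
    constructor <;> refine le_of_forall_exists_le ?_ ?_
    · rintro (i | i)
      exacts [i.elim, ⟨i, (ihl i).1⟩]
    · exact fun j => ⟨.inr j, (ihr j).1⟩
    · exact fun i => ⟨.inr i, (ihl i).2⟩
    · rintro (j | j)
      exacts [j.elim, ⟨j, (ihr j).2⟩]

theorem add_assoc_le_and_ge (x y z : PGame.{u}) :
    (x + y) + z ≤ x + (y + z) ∧ x + (y + z) ≤ (x + y) + z := by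
  induction x generalizing y z with
  | mk xl xr xL xR ihxl ihxr =>
    induction y generalizing z with
    | mk yl yr yL yR ihyl ihyr =>
      induction z with
      | mk zl zr zL zR ihzl ihzr =>
        constructor <;> refine le_of_forall_exists_le ?_ ?_
        · rintro ((i | i) | i)
          exacts [⟨.inl i, (ihxl i _ _).1⟩, ⟨.inr (.inl i), (ihyl i _).1⟩,
            ⟨.inr (.inr i), (ihzl i).1⟩]
        · rintro (i | i | i)
          exacts [⟨.inl (.inl i), (ihxr i _ _).1⟩, ⟨.inl (.inr i), (ihyr i _).1⟩,
            ⟨.inr i, (ihzr i).1⟩]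
        · rintro (i | i | i)
          exacts [⟨.inl (.inl i), (ihxl i (mk yl yr yL yR) (mk zl zr zL zR)).2⟩,
            ⟨.inl (.inr i), (ihyl i _).2⟩, ⟨.inr i, (ihzl i).2⟩]
        · rintro ((i | i) | i)
          exacts [⟨.inl i, (ihxr i (mk yl yr yL yR) (mk zl zr zL zR)).2⟩,
            ⟨.inr (.inl i), (ihyr i _).2⟩, ⟨.inr (.inr i), (ihzr i).2⟩]

theorem neg_le_neg_iff_and (x y : PGame.{u}) : (-y ≤ -x ↔ x ≤ y) ∧ (-x ≤ -y ↔ y ≤ x) := by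
  induction x generalizing y with
  | mk xl xr xL xR ihxl ihxr =>
    induction y with
    | mk yl yr yL yR ihyl ihyr =>
      constructor
      · rw [le_iff_forall_not_le (x := -mk yl yr yL yR), le_iff_forall_not_le (x := mk xl xr xL xR)]
        exact ⟨fun h => ⟨fun j => (not_congr (ihxl j _).2).1 (h.2 j),
            fun i => (not_congr (ihyr i).2).1 (h.1 i)⟩,
          fun h => ⟨fun i => (not_congr (ihyr i).2).2 (h.2 i),
            fun j => (not_congr (ihxl j _).2).2 (h.1 j)⟩⟩
      · rw [le_iff_forall_not_le (x := -mk xl xr xL xR), le_iff_forall_not_le (x := mk yl yr yL yR)]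
        exact ⟨fun h => ⟨fun j => (not_congr (ihyl j).1).1 (h.2 j),
            fun i => (not_congr (ihxr i _).1).1 (h.1 i)⟩,
          fun h => ⟨fun i => (not_congr (ihxr i _).1).2 (h.2 i),
            fun j => (not_congr (ihyl j).1).2 (h.1 j)⟩⟩

theorem neg_le_neg_iff {x y : PGame.{u}} : -y ≤ -x ↔ x ≤ y := (neg_le_neg_iff_and x y).1

theorem neg_add_le_zero_and_ge (x : PGame.{u}) : -x + x ≤ 0 ∧ 0 ≤ -x + x := by
  induction x with
  | mk xl xr xL xR ihl ihr =>
    constructor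
    · refine le_iff_forall_not_le.2 ⟨?_, nofun⟩
      rintro (i | i)
      · exact not_le_add_of_add_moveRight_le (a := -(xR i)) (b := mk xl xr xL xR) i (ihr i).1
      · exact not_le_add_of_moveRight_add_le (a := -mk xl xr xL xR) (b := xL i) i (ihl i).1
    · refine le_iff_forall_not_le.2 ⟨nofun, ?_⟩
      rintro (i | i)
      · exact not_add_le_of_le_add_moveLeft (a := -(xL i)) (b := mk xl xr xL xR) i (ihl i).2
      · exact not_add_le_of_le_moveLeft_add (a := -mk xl xr xL xR) (b := xR i) i (ihr i).2

instance setoid : Setoid PGame.{u} := AntisymmRel.setoid PGame (· ≤ ·)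

end PGame

open PGame

def Game : Type (u + 1) := Quotient PGame.setoid.{u}

namespace Game

def mk : PGame.{u} → Game.{u} := Quotient.mk _

@[elab_as_elim]
theorem ind {p : Game.{u} → Prop} (h : ∀ x, p (mk x)) (a : Game.{u}) : p a := Quotient.ind h a

theorem mk_eq_mk {x y : PGame.{u}} : mk x = mk y ↔ x ≤ y ∧ y ≤ x := Quotient.eq

instance : LE Game.{u} := ⟨Quotient.lift₂ (· ≤ ·) fun _ _ _ _ hx hy =>
  propext ⟨fun h => (hx.2.trans h).trans hy.1, fun h => (hx.1.trans h).trans hy.2⟩⟩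

theorem mk_le_mk {x y : PGame.{u}} : mk x ≤ mk y ↔ x ≤ y := Iff.rfl

instance : PartialOrder Game.{u} where
  le_refl := ind (le_refl (α := PGame))
  le_trans := ind fun _ => ind fun _ => ind fun _ => le_trans (α := PGame)
  le_antisymm := ind fun _ => ind fun _ h₁ h₂ => mk_eq_mk.2 ⟨h₁, h₂⟩

theorem mk_lt_mk {x y : PGame.{u}} : mk x < mk y ↔ x < y := Iff.rfl

instance : Zero Game.{u} := ⟨mk 0⟩

instance : Add Game.{u} := ⟨Quotient.map₂ (· + ·) fun _ _ hx _ _ hy =>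
  ⟨add_le_add hx.1 hy.1, add_le_add hx.2 hy.2⟩⟩

instance : Neg Game.{u} := ⟨Quotient.map (-·) fun _ _ h =>
  ⟨neg_le_neg_iff.2 h.2, neg_le_neg_iff.2 h.1⟩⟩

theorem mk_add (x y : PGame.{u}) : mk (x + y) = mk x + mk y := rfl

instance : AddCommGroup Game.{u} where
  add_assoc := ind fun x => ind fun y => ind fun z => mk_eq_mk.2 (add_assoc_le_and_ge x y z)
  zero_add := ind fun x => mk_eq_mk.2 (zero_add_le_and_ge x)
  add_zero := ind fun x => mk_eq_mk.2 ⟨(add_comm_le x 0).trans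
    (zero_add_le_and_ge x).1, (zero_add_le_and_ge x).2.trans (add_comm_le 0 x)⟩
  add_comm := ind fun x => ind fun y => mk_eq_mk.2 ⟨add_comm_le x y, add_comm_le y x⟩
  neg_add_cancel := ind fun x => mk_eq_mk.2 (neg_add_le_zero_and_ge x)
  nsmul := nsmulRec
  zsmul := zsmulRec

instance : IsOrderedAddMonoid Game.{u} where
  add_le_add_left := ind fun _ => ind fun _ h => ind fun z => add_le_add_left (α := PGame) h z

end Game

namespace PGame

instance : AddLeftStrictMono PGame.{u} :=
  ⟨fun x _ _ h => Game.mk_lt_mk.1 (add_lt_add_right (Game.mk_lt_mk.2 h) (Game.mk x))⟩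

instance : AddRightStrictMono PGame.{u} :=
  ⟨fun x _ _ h => Game.mk_lt_mk.1 (add_lt_add_left (Game.mk_lt_mk.2 h) (Game.mk x))⟩

theorem neg_lt_neg {x y : PGame.{u}} (h : x < y) : -y < -x :=
  ⟨neg_le_neg_iff.2 h.1, mt neg_le_neg_iff.1 h.2⟩

theorem numeric_def {x : PGame.{u}} : Numeric x ↔ (∀ i j, x.moveLeft i < x.moveRight j) ∧
    (∀ i, Numeric (x.moveLeft i)) ∧ ∀ j, Numeric (x.moveRight j) := by
  cases x; exact Iff.rfl

theorem numeric_zero : Numeric (0 : PGame.{u}) :=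
  numeric_def.2 ⟨nofun, nofun, nofun⟩

namespace Numeric

variable {x y : PGame.{u}}

theorem moveLeft (hx : Numeric x) (i : x.LeftMoves) : Numeric (x.moveLeft i) :=
  (numeric_def.1 hx).2.1 i

theorem moveRight (hx : Numeric x) (j : x.RightMoves) : Numeric (x.moveRight j) :=
  (numeric_def.1 hx).2.2 j

theorem moveLeft_lt_moveRight (hx : Numeric x) (i : x.LeftMoves) (j : x.RightMoves) :
    x.moveLeft i < x.moveRight j :=
  (numeric_def.1 hx).1 i j

theorem le_total (hx : Numeric x) (hy : Numeric y) : x ≤ y ∨ y ≤ x := by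
  induction x generalizing y with
  | mk xl xr xL xR ihl ihr =>
    by_contra! h
    rcases not_le_iff_exists_le.1 h.1 with ⟨i, hi⟩ | ⟨j, hj⟩ <;>
      rcases not_le_iff_exists_le.1 h.2 with ⟨i', hi'⟩ | ⟨j', hj'⟩
    · rcases ihl i (hx.moveLeft i) (hy.moveLeft i') with h | h
      · exact not_le_moveLeft y i' (hi.trans h)
      · exact not_le_moveLeft _ i (hi'.trans h)
    · exact (hx.moveLeft_lt_moveRight i j').not_ge (hj'.trans hi)
    · exact (hy.moveLeft_lt_moveRight i' j).not_ge (hj.trans hi')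
    · rcases ihr j' (hx.moveRight j') (hy.moveRight j) with h | h
      · exact not_moveRight_le _ j' (h.trans hj)
      · exact not_moveRight_le y j (h.trans hj')

theorem moveLeft_lt (hx : Numeric x) (i : x.LeftMoves) : x.moveLeft i < x :=
  ⟨((hx.moveLeft i).le_total hx).resolve_right (not_le_moveLeft x i), not_le_moveLeft x i⟩

theorem lt_moveRight (hx : Numeric x) (j : x.RightMoves) : x < x.moveRight j :=
  ⟨(hx.le_total (hx.moveRight j)).resolve_right (not_moveRight_le x j), not_moveRight_le x j⟩

theorem add (hx : Numeric x) (hy : Numeric y) : Numeric (x + y) := by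
  induction x generalizing y with
  | mk xl xr xL xR ihxl ihxr =>
    induction y with
    | mk yl yr yL yR ihyl ihyr =>
      refine numeric_def.2 ⟨?_, ?_, ?_⟩
      · rintro (i | k) (j | k')
        · exact add_lt_add_left (hx.moveLeft_lt_moveRight i j) _
        · exact (add_lt_add_left (hx.moveLeft_lt i) _).trans
            (add_lt_add_right (hy.lt_moveRight k') _)
        · exact (add_lt_add_right (hy.moveLeft_lt k) _).trans
            (add_lt_add_left (hx.lt_moveRight j) _)
        · exact add_lt_add_right (hy.moveLeft_lt_moveRight k k') (mk xl xr xL xR)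
      · rintro (i | k)
        exacts [ihxl i (hx.moveLeft i) hy, ihyl k (hy.moveLeft k)]
      · rintro (j | k)
        exacts [ihxr j (hx.moveRight j) hy, ihyr k (hy.moveRight k)]

theorem neg (hx : Numeric x) : Numeric (-x) := by
  induction x with
  | mk xl xr xL xR ihl ihr =>
    exact numeric_def.2 ⟨fun i j => neg_lt_neg (hx.moveLeft_lt_moveRight j i),
      fun i => ihr i (hx.moveRight i), fun j => ihl j (hx.moveLeft j)⟩

theorem sub (hx : Numeric x) (hy : Numeric y) : Numeric (x - y) := hx.add hy.neg

end Numeric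

def mulOption (x y a b : PGame.{u}) : PGame.{u} := a * y + x * b - a * b

theorem mul_eq (x y : PGame.{u}) : x * y =
    mk (x.LeftMoves × y.LeftMoves ⊕ x.RightMoves × y.RightMoves)
      (x.LeftMoves × y.RightMoves ⊕ x.RightMoves × y.LeftMoves)
      (Sum.elim (fun p => mulOption x y (x.moveLeft p.1) (y.moveLeft p.2))
        (fun p => mulOption x y (x.moveRight p.1) (y.moveRight p.2)))
      (Sum.elim (fun p => mulOption x y (x.moveLeft p.1) (y.moveRight p.2))
        (fun p => mulOption x y (x.moveRight p.1) (y.moveLeft p.2))) := by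
  cases x; cases y; rfl

variable {x y : PGame.{u}}

theorem forall_moveLeft_mul (p : PGame.{u} → Prop) :
    (∀ i, p ((x * y).moveLeft i)) ↔ (∀ i k, p (mulOption x y (x.moveLeft i) (y.moveLeft k))) ∧
      ∀ j k, p (mulOption x y (x.moveRight j) (y.moveRight k)) := by
  rw [mul_eq]; exact Sum.forall.trans (and_congr Prod.forall Prod.forall)

theorem forall_moveRight_mul (p : PGame.{u} → Prop) :
    (∀ j, p ((x * y).moveRight j)) ↔ (∀ i k, p (mulOption x y (x.moveLeft i) (y.moveRight k))) ∧
      ∀ j k, p (mulOption x y (x.moveRight j) (y.moveLeft k)) := by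
  rw [mul_eq]; exact Sum.forall.trans (and_congr Prod.forall Prod.forall)

theorem exists_moveLeft_mul (p : PGame.{u} → Prop) :
    (∃ i, p ((x * y).moveLeft i)) ↔ (∃ i k, p (mulOption x y (x.moveLeft i) (y.moveLeft k))) ∨
      ∃ j k, p (mulOption x y (x.moveRight j) (y.moveRight k)) := by
  rw [mul_eq]; exact Sum.exists.trans (or_congr Prod.exists Prod.exists)

theorem exists_moveRight_mul (p : PGame.{u} → Prop) :
    (∃ j, p ((x * y).moveRight j)) ↔ (∃ i k, p (mulOption x y (x.moveLeft i) (y.moveRight k))) ∨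
      ∃ j k, p (mulOption x y (x.moveRight j) (y.moveLeft k)) := by
  rw [mul_eq]; exact Sum.exists.trans (or_congr Prod.exists Prod.exists)

theorem mk_mulOption (x y a b : PGame.{u}) :
    Game.mk (mulOption x y a b) = Game.mk (a * y) + Game.mk (x * b) - Game.mk (a * b) :=
  rfl

theorem mk_mul_comm (x y : PGame.{u}) : Game.mk (x * y) = Game.mk (y * x) := by
  induction x generalizing y with
  | mk xl xr xL xR ihl ihr =>
    induction y with
    | mk yl yr yL yR ihl' ihr' =>
      have key {x y a b : PGame.{u}} (hay : Game.mk (a * y) = Game.mk (y * a))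
          (hxb : Game.mk (x * b) = Game.mk (b * x)) (hab : Game.mk (a * b) = Game.mk (b * a)) :
          Game.mk (mulOption x y a b) = Game.mk (mulOption y x b a) := by
        rw [mk_mulOption, mk_mulOption, hay, hxb, hab, add_comm (Game.mk (y * a))]
      have hLL (i k) := key (ihl i (mk yl yr yL yR)) (ihl' k) (ihl i (yL k))
      have hRR (j k) := key (ihr j (mk yl yr yL yR)) (ihr' k) (ihr j (yR k))
      have hLR (i k) := key (ihl i (mk yl yr yL yR)) (ihr' k) (ihl i (yR k))
      have hRL (j k) := key (ihr j (mk yl yr yL yR)) (ihl' k) (ihr j (yL k))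
      set x := mk xl xr xL xR
      set y := mk yl yr yL yR
      refine Game.mk_eq_mk.2 ⟨le_of_forall_exists_le ?_ ?_, le_of_forall_exists_le ?_ ?_⟩
      · refine (forall_moveLeft_mul fun z => ∃ i, z ≤ (y * x).moveLeft i).2
          ⟨fun i k => ?_, fun j k => ?_⟩
        exacts [(exists_moveLeft_mul (_ ≤ ·)).2 (.inl ⟨k, i, (Game.mk_eq_mk.1 (hLL i k)).1⟩),
          (exists_moveLeft_mul (_ ≤ ·)).2 (.inr ⟨k, j, (Game.mk_eq_mk.1 (hRR j k)).1⟩)]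
      · refine (forall_moveRight_mul fun z => ∃ j, (x * y).moveRight j ≤ z).2
          ⟨fun k j => ?_, fun k i => ?_⟩
        exacts [(exists_moveRight_mul (· ≤ _)).2 (.inr ⟨j, k, (Game.mk_eq_mk.1 (hRL j k)).1⟩),
          (exists_moveRight_mul (· ≤ _)).2 (.inl ⟨i, k, (Game.mk_eq_mk.1 (hLR i k)).1⟩)]
      · refine (forall_moveLeft_mul fun z => ∃ i, z ≤ (x * y).moveLeft i).2
          ⟨fun k i => ?_, fun k j => ?_⟩
        exacts [(exists_moveLeft_mul (_ ≤ ·)).2 (.inl ⟨i, k, (Game.mk_eq_mk.1 (hLL i k)).2⟩),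
          (exists_moveLeft_mul (_ ≤ ·)).2 (.inr ⟨j, k, (Game.mk_eq_mk.1 (hRR j k)).2⟩)]
      · refine (forall_moveRight_mul fun z => ∃ j, (y * x).moveRight j ≤ z).2
          ⟨fun i k => ?_, fun j k => ?_⟩
        exacts [(exists_moveRight_mul (· ≤ _)).2 (.inr ⟨k, i, (Game.mk_eq_mk.1 (hLR i k)).2⟩),
          (exists_moveRight_mul (· ≤ _)).2 (.inl ⟨k, j, (Game.mk_eq_mk.1 (hRL j k)).2⟩)]

theorem mk_mulOption_comm (x y a b : PGame.{u}) :
    Game.mk (mulOption x y a b) = Game.mk (mulOption y x b a) := by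
  rw [mk_mulOption, mk_mulOption, mk_mul_comm a, mk_mul_comm x, mk_mul_comm a,
    add_comm (Game.mk (y * a))]

theorem mk_mul_zero (x : PGame.{u}) : Game.mk (x * 0) = 0 :=
  Game.mk_eq_mk.2
    ⟨le_of_forall_lt ((forall_moveLeft_mul (· < 0)).2 ⟨fun _ => nofun, fun _ => nofun⟩) nofun,
      le_of_forall_lt nofun ((forall_moveRight_mul (0 < ·)).2 ⟨fun _ => nofun, fun _ => nofun⟩)⟩

def crossDiff (x₁ x₂ y₁ y₂ : PGame.{u}) : Game.{u} :=
  Game.mk (x₁ * y₁) + Game.mk (x₂ * y₂) - Game.mk (x₁ * y₂) - Game.mk (x₂ * y₁)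

theorem crossDiff_comm (x₁ x₂ y₁ y₂ : PGame.{u}) :
    crossDiff x₁ x₂ y₁ y₂ = crossDiff y₁ y₂ x₁ x₂ := by
  rw [crossDiff, crossDiff, mk_mul_comm x₁, mk_mul_comm x₂, mk_mul_comm x₁, mk_mul_comm x₂]
  abel

theorem crossDiff_swap (x₁ x₂ y₁ y₂ : PGame.{u}) :
    crossDiff x₂ x₁ y₂ y₁ = crossDiff x₁ x₂ y₁ y₂ := by
  rw [crossDiff, crossDiff]; abel

theorem crossDiff_add_crossDiff_left (x₁ x₂ x₃ y₁ y₂ : PGame.{u}) :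
    crossDiff x₁ x₂ y₁ y₂ + crossDiff x₂ x₃ y₁ y₂ = crossDiff x₁ x₃ y₁ y₂ := by
  simp only [crossDiff]; abel

theorem crossDiff_add_crossDiff_right (x₁ x₂ y₁ y₂ y₃ : PGame.{u}) :
    crossDiff x₁ x₂ y₁ y₂ + crossDiff x₁ x₂ y₂ y₃ = crossDiff x₁ x₂ y₁ y₃ := by
  simp only [crossDiff]; abel

theorem crossDiff_eq_zero {x₁ x₂ y₁ y₂ : PGame.{u}}
    (h₁ : Game.mk (x₁ * y₁) = Game.mk (x₂ * y₁)) (h₂ : Game.mk (x₁ * y₂) = Game.mk (x₂ * y₂)) :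
    crossDiff x₁ x₂ y₁ y₂ = 0 := by
  rw [crossDiff, h₁, h₂]; abel

theorem mk_mulOption_eq_sub (x y a b : PGame.{u}) :
    Game.mk (mulOption x y a b) = Game.mk (x * y) - crossDiff a x b y := by
  rw [mk_mulOption, crossDiff]; abel

theorem mk_mulOption_eq_add (x y a b : PGame.{u}) :
    Game.mk (mulOption x y a b) = Game.mk (x * y) + crossDiff a x y b := by
  rw [mk_mulOption, crossDiff]; abel

namespace Numeric

theorem crossDiff_moveLeft_moveLeft_pos (h : Numeric (x * y)) (i : x.LeftMoves)
    (k : y.LeftMoves) : 0 < crossDiff (x.moveLeft i) x (y.moveLeft k) y := by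
  have := Game.mk_lt_mk.2 (((forall_moveLeft_mul (· < x * y)).1 h.moveLeft_lt).1 i k)
  rwa [mk_mulOption_eq_sub, sub_lt_self_iff] at this

theorem crossDiff_moveRight_moveRight_pos (h : Numeric (x * y)) (j : x.RightMoves)
    (k : y.RightMoves) : 0 < crossDiff x (x.moveRight j) y (y.moveRight k) := by
  have := Game.mk_lt_mk.2 (((forall_moveLeft_mul (· < x * y)).1 h.moveLeft_lt).2 j k)
  rwa [mk_mulOption_eq_sub, sub_lt_self_iff, crossDiff_swap] at this

theorem crossDiff_moveLeft_moveRight_pos (h : Numeric (x * y)) (i : x.LeftMoves)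
    (k : y.RightMoves) : 0 < crossDiff (x.moveLeft i) x y (y.moveRight k) := by
  have := Game.mk_lt_mk.2 (((forall_moveRight_mul (x * y < ·)).1 h.lt_moveRight).1 i k)
  rwa [mk_mulOption_eq_add, lt_add_iff_pos_right] at this

theorem crossDiff_moveRight_moveLeft_pos (h : Numeric (x * y)) (j : x.RightMoves)
    (k : y.LeftMoves) : 0 < crossDiff x (x.moveRight j) (y.moveLeft k) y := by
  have := Game.mk_lt_mk.2 (((forall_moveRight_mul (x * y < ·)).1 h.lt_moveRight).2 j k)
  rwa [mk_mulOption_eq_add, lt_add_iff_pos_right, crossDiff_swap] at this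

end Numeric

structure MulCompat (x₁ x₂ y : PGame.{u}) : Prop where
  mk_mul_eq : Game.mk x₁ = Game.mk x₂ → Game.mk (x₁ * y) = Game.mk (x₂ * y)
  crossDiff_moveLeft_pos : x₁ < x₂ → ∀ k, 0 < crossDiff x₁ x₂ (y.moveLeft k) y
  crossDiff_moveRight_pos : x₁ < x₂ → ∀ k, 0 < crossDiff x₁ x₂ y (y.moveRight k)

namespace MulCompat

variable {x₁ x₂ y : PGame.{u}}

theorem crossDiff_moveLeft_nonneg (h : MulCompat x₁ x₂ y) {k : y.LeftMoves}
    (hk : MulCompat x₁ x₂ (y.moveLeft k)) (hx : x₁ ≤ x₂) :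
    0 ≤ crossDiff x₁ x₂ (y.moveLeft k) y := by
  by_cases hx' : x₂ ≤ x₁
  · have e := Game.mk_eq_mk.2 ⟨hx, hx'⟩
    exact (crossDiff_eq_zero (hk.mk_mul_eq e) (h.mk_mul_eq e)).ge
  · exact (h.crossDiff_moveLeft_pos ⟨hx, hx'⟩ k).le

theorem crossDiff_moveRight_nonneg (h : MulCompat x₁ x₂ y) {k : y.RightMoves}
    (hk : MulCompat x₁ x₂ (y.moveRight k)) (hx : x₁ ≤ x₂) :
    0 ≤ crossDiff x₁ x₂ y (y.moveRight k) := by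
  by_cases hx' : x₂ ≤ x₁
  · have e := Game.mk_eq_mk.2 ⟨hx, hx'⟩
    exact (crossDiff_eq_zero (h.mk_mul_eq e) (hk.mk_mul_eq e)).ge
  · exact (h.crossDiff_moveRight_pos ⟨hx, hx'⟩ k).le

end MulCompat

-- The difference of the two options, taken around the rectangle with corners `(a, b)` and
-- `(a', b')` through `(a', b)`, respectively through `(a, b')`.
theorem mk_mulOption_lt_mulOption₁ {x y a a' b b' : PGame.{u}}
    (h : 0 < crossDiff a a' b y + crossDiff a' x b b') :
    Game.mk (mulOption x y a b) < Game.mk (mulOption x y a' b') := by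
  rw [← sub_pos]; convert h using 1; simp only [mk_mulOption, crossDiff]; abel

theorem mk_mulOption_lt_mulOption₂ {x y a a' b b' : PGame.{u}}
    (h : 0 < crossDiff a x b b' + crossDiff a a' b' y) :
    Game.mk (mulOption x y a b) < Game.mk (mulOption x y a' b') := by
  rw [← sub_pos]; convert h using 1; simp only [mk_mulOption, crossDiff]; abel

def IsOption (a x : PGame.{u}) : Prop := (∃ i, x.moveLeft i = a) ∨ ∃ j, x.moveRight j = a

theorem isOption_moveLeft (x : PGame.{u}) (i : x.LeftMoves) : IsOption (x.moveLeft i) x :=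
  .inl ⟨i, rfl⟩

theorem isOption_moveRight (x : PGame.{u}) (j : x.RightMoves) : IsOption (x.moveRight j) x :=
  .inr ⟨j, rfl⟩

theorem wellFounded_isOption : WellFounded (IsOption.{u}) := by
  refine ⟨fun x => ?_⟩
  induction x with
  | mk l r L R ihl ihr =>
    refine ⟨_, ?_⟩
    rintro _ (⟨i, rfl⟩ | ⟨j, rfl⟩)
    exacts [ihl i, ihr j]

theorem Numeric.isOption {a x : PGame.{u}} (hx : Numeric x) (h : IsOption a x) : Numeric a := by
  rcases h with ⟨i, rfl⟩ | ⟨j, rfl⟩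
  exacts [hx.moveLeft i, hx.moveRight j]

open Relation

theorem Numeric.of_reflGen_isOption {a x : PGame.{u}} (hx : Numeric x) :
    ReflGen IsOption a x → Numeric a
  | .refl => hx
  | .single h => hx.isOption h

theorem mk_mulOption_moveLeft_lt_moveLeft {x y : PGame.{u}} (hx : Numeric x) (hy : Numeric y)
    (hxy : ∀ a₁ a₂ b, IsOption a₁ x → IsOption a₂ x → ReflGen IsOption b y → MulCompat a₁ a₂ b)
    (hyx : ∀ b₁ b₂, IsOption b₁ y → IsOption b₂ y → MulCompat b₁ b₂ x)
    (i i' : x.LeftMoves) (k : y.LeftMoves) (k' : y.RightMoves) :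
    Game.mk (mulOption x y (x.moveLeft i) (y.moveLeft k)) <
      Game.mk (mulOption x y (x.moveLeft i') (y.moveRight k')) := by
  have hy' := (hyx _ _ (isOption_moveLeft y k) (isOption_moveRight y k')).crossDiff_moveLeft_pos
    (hy.moveLeft_lt_moveRight k k')
  have hx' (b) (hb : ReflGen IsOption b y) (i₁ i₂) :=
    hxy _ _ b (isOption_moveLeft x i₁) (isOption_moveLeft x i₂) hb
  rcases (hx.moveLeft i).le_total (hx.moveLeft i') with h | h
  · refine mk_mulOption_lt_mulOption₁ (add_pos_of_nonneg_of_pos ?_ ?_)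
    · exact (hx' y .refl i i').crossDiff_moveLeft_nonneg
        (hx' _ (.single (isOption_moveLeft y k)) i i') h
    · rw [crossDiff_comm]; exact hy' i'
  · refine mk_mulOption_lt_mulOption₂ (add_pos_of_pos_of_nonneg ?_ ?_)
    · rw [crossDiff_comm]; exact hy' i
    · rw [← crossDiff_swap]
      exact (hx' y .refl i' i).crossDiff_moveRight_nonneg
        (hx' _ (.single (isOption_moveRight y k')) i' i) h

theorem mk_mulOption_moveRight_lt_moveRight {x y : PGame.{u}} (hx : Numeric x) (hy : Numeric y)
    (hxy : ∀ a₁ a₂ b, IsOption a₁ x → IsOption a₂ x → ReflGen IsOption b y → MulCompat a₁ a₂ b)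
    (hyx : ∀ b₁ b₂, IsOption b₁ y → IsOption b₂ y → MulCompat b₁ b₂ x)
    (j j' : x.RightMoves) (k : y.RightMoves) (k' : y.LeftMoves) :
    Game.mk (mulOption x y (x.moveRight j) (y.moveRight k)) <
      Game.mk (mulOption x y (x.moveRight j') (y.moveLeft k')) := by
  have hy' := (hyx _ _ (isOption_moveLeft y k') (isOption_moveRight y k)).crossDiff_moveRight_pos
    (hy.moveLeft_lt_moveRight k' k)
  have hx' (b) (hb : ReflGen IsOption b y) (j₁ j₂) :=
    hxy _ _ b (isOption_moveRight x j₁) (isOption_moveRight x j₂) hb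
  rcases (hx.moveRight j).le_total (hx.moveRight j') with h | h
  · refine mk_mulOption_lt_mulOption₂ (add_pos_of_pos_of_nonneg ?_ ?_)
    · rw [← crossDiff_swap, crossDiff_comm]; exact hy' j
    · exact (hx' y .refl j j').crossDiff_moveLeft_nonneg
        (hx' _ (.single (isOption_moveLeft y k')) j j') h
  · refine mk_mulOption_lt_mulOption₁ (add_pos_of_nonneg_of_pos ?_ ?_)
    · rw [← crossDiff_swap]
      exact (hx' y .refl j' j).crossDiff_moveRight_nonneg
        (hx' _ (.single (isOption_moveRight y k)) j' j) h
    · rw [← crossDiff_swap, crossDiff_comm]; exact hy' j'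

theorem numeric_mul_of_isOption {x y : PGame.{u}} (hx : Numeric x) (hy : Numeric y)
    (hNx : ∀ a b, IsOption a x → ReflGen IsOption b y → Numeric (a * b))
    (hNy : ∀ b, IsOption b y → Numeric (x * b))
    (hxy : ∀ a₁ a₂ b, IsOption a₁ x → IsOption a₂ x → ReflGen IsOption b y → MulCompat a₁ a₂ b)
    (hyx : ∀ b₁ b₂ a, IsOption b₁ y → IsOption b₂ y → ReflGen IsOption a x → MulCompat b₁ b₂ a) :
    Numeric (x * y) := by
  have hN {a b} (ha : IsOption a x) (hb : IsOption b y) : Numeric (mulOption x y a b) :=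
    ((hNx a y ha .refl).add (hNy b hb)).sub (hNx a b ha (.single hb))
  have hyx₀ b₁ b₂ (hb₁ : IsOption b₁ y) (hb₂ : IsOption b₂ y) := hyx b₁ b₂ x hb₁ hb₂ .refl
  have hxy₀ a₁ a₂ (ha₁ : IsOption a₁ x) (ha₂ : IsOption a₂ x) := hxy a₁ a₂ y ha₁ ha₂ .refl
  refine numeric_def.2 ⟨?_, (forall_moveLeft_mul Numeric).2
    ⟨fun i k => hN (isOption_moveLeft x i) (isOption_moveLeft y k),
      fun j k => hN (isOption_moveRight x j) (isOption_moveRight y k)⟩,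
    (forall_moveRight_mul Numeric).2
    ⟨fun i k => hN (isOption_moveLeft x i) (isOption_moveRight y k),
      fun j k => hN (isOption_moveRight x j) (isOption_moveLeft y k)⟩⟩
  refine (forall_moveLeft_mul fun z => ∀ j, z < (x * y).moveRight j).2
    ⟨fun i k => ?_, fun j k => ?_⟩ <;>
  refine (forall_moveRight_mul (_ < ·)).2 ⟨fun i' k' => ?_, fun j' k' => ?_⟩ <;>
  refine Game.mk_lt_mk.1 ?_
  · exact mk_mulOption_moveLeft_lt_moveLeft hx hy hxy hyx₀ i i' k k'
  -- the mixed comparisons are the pure ones for `y * x`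
  · rw [mk_mulOption_comm, mk_mulOption_comm x]
    exact mk_mulOption_moveLeft_lt_moveLeft hy hx hyx hxy₀ k k' i j'
  · rw [mk_mulOption_comm, mk_mulOption_comm x]
    exact mk_mulOption_moveRight_lt_moveRight hy hx hyx hxy₀ k k' j i'
  · exact mk_mulOption_moveRight_lt_moveRight hx hy hxy hyx₀ j j' k k'

theorem mul_le_mul_of_equiv {x₁ x₂ y : PGame.{u}} (hx₁ : Numeric x₁) (hx₂ : Numeric x₂)
    (h₁₂ : x₁ ≤ x₂) (h₂₁ : x₂ ≤ x₁) (hy : ∀ b, IsOption b y → Game.mk (x₁ * b) = Game.mk (x₂ * b))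
    (hL₁ : ∀ i, MulCompat (x₁.moveLeft i) x₂ y) (hR₁ : ∀ j, MulCompat x₂ (x₁.moveRight j) y)
    (hL₂ : ∀ i, MulCompat (x₂.moveLeft i) x₁ y) (hR₂ : ∀ j, MulCompat x₁ (x₂.moveRight j) y) :
    x₁ * y ≤ x₂ * y := by
  have hmO {a b} (hb : IsOption b y) :
      Game.mk (mulOption x₁ y a b) = Game.mk (mulOption x₂ y a b) := by
    rw [mk_mulOption, mk_mulOption, hy b hb]
  refine le_of_forall_lt ((forall_moveLeft_mul (· < x₂ * y)).2 ⟨fun i k => ?_, fun j k => ?_⟩)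
    ((forall_moveRight_mul (x₁ * y < ·)).2 ⟨fun i k => ?_, fun j k => ?_⟩) <;>
  refine Game.mk_lt_mk.1 ?_
  · rw [hmO (isOption_moveLeft y k), mk_mulOption_eq_sub, sub_lt_self_iff]
    exact (hL₁ i).crossDiff_moveLeft_pos ((hx₁.moveLeft_lt i).trans_le h₁₂) k
  · rw [hmO (isOption_moveRight y k), mk_mulOption_eq_sub, sub_lt_self_iff, crossDiff_swap]
    exact (hR₁ j).crossDiff_moveRight_pos (h₂₁.trans_lt (hx₁.lt_moveRight j)) k
  · rw [← hmO (isOption_moveRight y k), mk_mulOption_eq_add, lt_add_iff_pos_right]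
    exact (hL₂ i).crossDiff_moveRight_pos ((hx₂.moveLeft_lt i).trans_le h₂₁) k
  · rw [← hmO (isOption_moveLeft y k), mk_mulOption_eq_add, lt_add_iff_pos_right, crossDiff_swap]
    exact (hR₂ j).crossDiff_moveLeft_pos (h₁₂.trans_lt (hx₂.lt_moveRight j)) k

theorem mulCompat_of_isOption {x₁ x₂ y : PGame.{u}} (hx₁ : Numeric x₁) (hx₂ : Numeric x₂)
    (hN₁ : Numeric (x₁ * y)) (hN₂ : Numeric (x₂ * y))
    (h₁ : ∀ a b, IsOption a x₂ → ReflGen IsOption b y → MulCompat x₁ a b)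
    (h₂ : ∀ a b, IsOption a x₁ → ReflGen IsOption b y → MulCompat a x₂ b)
    (h₁' : ∀ a, IsOption a x₁ → MulCompat x₂ a y) (h₂' : ∀ a, IsOption a x₂ → MulCompat a x₁ y)
    (hy : ∀ b, IsOption b y → MulCompat x₁ x₂ b) :
    MulCompat x₁ x₂ y := by
  refine ⟨fun e => ?_, fun hlt k => ?_, fun hlt k => ?_⟩
  · obtain ⟨h₁₂, h₂₁⟩ := Game.mk_eq_mk.1 e
    have hy' b hb := (hy b hb).mk_mul_eq e
    have hL₁ i := h₂ _ y (isOption_moveLeft x₁ i) .refl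
    have hR₁ j := h₁' _ (isOption_moveRight x₁ j)
    have hL₂ i := h₂' _ (isOption_moveLeft x₂ i)
    have hR₂ j := h₁ _ y (isOption_moveRight x₂ j) .refl
    exact le_antisymm (mul_le_mul_of_equiv hx₁ hx₂ h₁₂ h₂₁ hy' hL₁ hR₁ hL₂ hR₂)
      (mul_le_mul_of_equiv hx₂ hx₁ h₂₁ h₁₂ (fun b hb => (hy' b hb).symm) hL₂ hR₂ hL₁ hR₁)
  all_goals rcases not_le_iff_exists_le.1 hlt.2 with ⟨i, hi⟩ | ⟨j, hj⟩
  · rw [← crossDiff_add_crossDiff_left _ (x₂.moveLeft i)]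
    refine add_pos_of_nonneg_of_pos ?_ (hN₂.crossDiff_moveLeft_moveLeft_pos i k)
    exact (h₁ _ y (isOption_moveLeft x₂ i) .refl).crossDiff_moveLeft_nonneg
      (h₁ _ _ (isOption_moveLeft x₂ i) (.single (isOption_moveLeft y k))) hi
  · rw [← crossDiff_add_crossDiff_left _ (x₁.moveRight j)]
    refine add_pos_of_pos_of_nonneg (hN₁.crossDiff_moveRight_moveLeft_pos j k) ?_
    exact (h₂ _ y (isOption_moveRight x₁ j) .refl).crossDiff_moveLeft_nonneg
      (h₂ _ _ (isOption_moveRight x₁ j) (.single (isOption_moveLeft y k))) hj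
  · rw [← crossDiff_add_crossDiff_left _ (x₂.moveLeft i)]
    refine add_pos_of_nonneg_of_pos ?_ (hN₂.crossDiff_moveLeft_moveRight_pos i k)
    exact (h₁ _ y (isOption_moveLeft x₂ i) .refl).crossDiff_moveRight_nonneg
      (h₁ _ _ (isOption_moveLeft x₂ i) (.single (isOption_moveRight y k))) hi
  · rw [← crossDiff_add_crossDiff_left _ (x₁.moveRight j)]
    refine add_pos_of_pos_of_nonneg (hN₁.crossDiff_moveRight_moveRight_pos j k) ?_
    exact (h₂ _ y (isOption_moveRight x₁ j) .refl).crossDiff_moveRight_nonneg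
      (h₂ _ _ (isOption_moveRight x₁ j) (.single (isOption_moveRight y k))) hj

def ArgsRel : Multiset PGame.{u} → Multiset PGame.{u} → Prop :=
  TransGen (CutExpand IsOption)

theorem wellFounded_argsRel : WellFounded ArgsRel.{u} :=
  wellFounded_isOption.cutExpand.transGen

theorem argsRel_of_eq_add {s t u : Multiset PGame.{u}} {x : PGame.{u}} (hs : s = u)
    (ht : t = u + {x}) : ArgsRel s t := by
  subst hs ht
  exact .single ⟨0, x, nofun, by rw [add_zero]⟩

theorem argsRel_of_isOption {a x b y : PGame.{u}} (ha : IsOption a x) (hb : ReflGen IsOption b y)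
    (u : Multiset PGame.{u}) {s t : Multiset PGame.{u}} (hs : s = u + {a} + {b})
    (ht : t = u + {x} + {y}) : ArgsRel s t := by
  subst hs ht
  have hx : ArgsRel (u + {a} + {y}) (u + {x} + {y}) :=
    .single ((cutExpand_add_right {y}).2 (cutExpand_add_single u ha))
  rcases hb with _ | hb
  exacts [hx, .head (cutExpand_add_single _ hb) hx]

theorem argsRel_of_isOption₂ {a₁ a₂ x b y : PGame.{u}} (ha₁ : IsOption a₁ x)
    (ha₂ : IsOption a₂ x) (hb : ReflGen IsOption b y) (u : Multiset PGame.{u})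
    {s t : Multiset PGame.{u}} (hs : s = u + {a₁} + {a₂} + {b}) (ht : t = u + {x} + {y}) :
    ArgsRel s t := by
  subst hs ht
  have hx : ArgsRel (u + {a₁} + {a₂} + {y}) (u + {x} + {y}) := by
    refine .single ((cutExpand_add_right {y}).2 ?_)
    rw [add_assoc]
    refine (cutExpand_add_left u).2 (cutExpand_singleton fun z hz => ?_)
    rcases Multiset.mem_add.1 hz with hz | hz <;> rw [Multiset.mem_singleton.1 hz]
    exacts [ha₁, ha₂]
  rcases hb with _ | hb
  exacts [hx, .head (cutExpand_add_single _ hb) hx]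

def MulClaims (s : Multiset PGame.{u}) : Prop :=
  (∀ x y, s = {x} + {y} → Numeric x → Numeric y → Numeric (x * y)) ∧
    ∀ x₁ x₂ y, s = {x₁} + {x₂} + {y} → Numeric x₁ → Numeric x₂ → Numeric y → MulCompat x₁ x₂ y

theorem mulClaims (s : Multiset PGame.{u}) : MulClaims s := by
  induction s using wellFounded_argsRel.induction with
  | _ s ih =>
  have IHN {a b} (h : ArgsRel ({a} + {b}) s) := (ih _ h).1 a b rfl
  have IHC {a₁ a₂ b} (h : ArgsRel ({a₁} + {a₂} + {b}) s) := (ih _ h).2 a₁ a₂ b rfl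
  refine ⟨?_, ?_⟩
  · rintro x y rfl hx hy
    refine numeric_mul_of_isOption hx hy (fun a b ha hb => ?_) (fun b hb => ?_)
      (fun a₁ a₂ b h₁ h₂ hb => ?_) (fun b₁ b₂ a h₁ h₂ ha => ?_)
    · exact IHN (argsRel_of_isOption ha hb 0 (by abel) (by abel)) (hx.isOption ha)
        (hy.of_reflGen_isOption hb)
    · exact IHN (argsRel_of_isOption hb .refl 0 (by abel) (by abel)) hx (hy.isOption hb)
    · exact IHC (argsRel_of_isOption₂ h₁ h₂ hb 0 (by abel) (by abel)) (hx.isOption h₁)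
        (hx.isOption h₂) (hy.of_reflGen_isOption hb)
    · exact IHC (argsRel_of_isOption₂ h₁ h₂ ha 0 (by abel) (by abel)) (hy.isOption h₁)
        (hy.isOption h₂) (hx.of_reflGen_isOption ha)
  · rintro x₁ x₂ y rfl hx₁ hx₂ hy
    refine mulCompat_of_isOption hx₁ hx₂ ?_ ?_ (fun a b ha hb => ?_) (fun a b ha hb => ?_)
      (fun a ha => ?_) (fun a ha => ?_) (fun b hb => ?_)
    · exact IHN (argsRel_of_eq_add (x := x₂) rfl (by abel)) hx₁ hy
    · exact IHN (argsRel_of_eq_add (x := x₁) rfl (by abel)) hx₂ hy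
    · exact IHC (argsRel_of_isOption ha hb {x₁} rfl rfl) hx₁ (hx₂.isOption ha)
        (hy.of_reflGen_isOption hb)
    · exact IHC (argsRel_of_isOption ha hb {x₂} (by abel) (by abel)) (hx₁.isOption ha) hx₂
        (hy.of_reflGen_isOption hb)
    · exact IHC (argsRel_of_isOption ha .refl {x₂} rfl (by abel)) hx₂ (hx₁.isOption ha) hy
    · exact IHC (argsRel_of_isOption ha .refl {x₁} (by abel) rfl) (hx₂.isOption ha) hx₁ hy
    · exact IHC (argsRel_of_isOption (b := x₂) hb .refl {x₁} (by abel) (by abel)) hx₁ hx₂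
        (hy.isOption hb)

theorem Numeric.mulCompat {x₁ x₂ y : PGame.{u}} (hx₁ : Numeric x₁) (hx₂ : Numeric x₂)
    (hy : Numeric y) : MulCompat x₁ x₂ y :=
  (mulClaims _).2 x₁ x₂ y rfl hx₁ hx₂ hy

theorem crossDiff_nonneg_of_le {x₁ x₂ y₁ y₂ : PGame.{u}} (hx₁ : Numeric x₁) (hx₂ : Numeric x₂)
    (hy₁ : Numeric y₁) (hy₂ : Numeric y₂) (hy : y₁ ≤ y₂)
    (hlt : y₁ < y₂ → 0 < crossDiff x₁ x₂ y₁ y₂) : 0 ≤ crossDiff x₁ x₂ y₁ y₂ := by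
  by_cases h : y₂ ≤ y₁
  · have e := Game.mk_eq_mk.2 ⟨hy, h⟩
    rw [crossDiff_comm, crossDiff_eq_zero ((hy₁.mulCompat hy₂ hx₁).mk_mul_eq e)
      ((hy₁.mulCompat hy₂ hx₂).mk_mul_eq e)]
  · exact (hlt ⟨hy, h⟩).le

theorem crossDiff_pos {x₁ x₂ y₁ y₂ : PGame.{u}} (hx₁ : Numeric x₁) (hx₂ : Numeric x₂)
    (hy₁ : Numeric y₁) (hy₂ : Numeric y₂) (hx : x₁ < x₂) (hy : y₁ < y₂) :
    0 < crossDiff x₁ x₂ y₁ y₂ := by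
  induction y₁ generalizing y₂ with
  | mk l₁ r₁ L₁ R₁ _ ihR₁ =>
    induction y₂ with
    | mk l₂ r₂ L₂ R₂ ihL₂ _ =>
      rcases not_le_iff_exists_le.1 hy.2 with ⟨i, hi⟩ | ⟨j, hj⟩
      · rw [← crossDiff_add_crossDiff_right _ _ _ (L₂ i)]
        exact add_pos_of_nonneg_of_pos
          (crossDiff_nonneg_of_le hx₁ hx₂ hy₁ (hy₂.moveLeft i) hi (ihL₂ i (hy₂.moveLeft i)))
          ((hx₁.mulCompat hx₂ hy₂).crossDiff_moveLeft_pos hx i)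
      · rw [← crossDiff_add_crossDiff_right _ _ _ (R₁ j)]
        exact add_pos_of_pos_of_nonneg ((hx₁.mulCompat hx₂ hy₁).crossDiff_moveRight_pos hx j)
          (crossDiff_nonneg_of_le hx₁ hx₂ (hy₁.moveRight j) hy₂ hj (ihR₁ j (hy₁.moveRight j) hy₂))

theorem crossDiff_pos_iff (x₁ x₂ y₁ y₂ : PGame.{u}) :
    0 < crossDiff x₁ x₂ y₁ y₂ ↔ x₁ * y₂ + x₂ * y₁ < x₁ * y₁ + x₂ * y₂ := by
  rw [crossDiff, sub_sub, sub_pos, ← Game.mk_add, ← Game.mk_add, Game.mk_lt_mk]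

theorem crossDiff_zero_left (x₁ x₂ y : PGame.{u}) :
    crossDiff x₁ x₂ 0 y = Game.mk (x₂ * y) - Game.mk (x₁ * y) := by
  rw [crossDiff, mk_mul_zero, mk_mul_zero]; abel

end PGame

end SetTheory

end

/-- If `x₁ < x₂` and `y₁ < y₂` are numbers, then
`x₁·y₂ + x₂·y₁ < x₁·y₁ + x₂·y₂`; in particular, multiplication by a positive
number `y` is strictly monotone. -/
theorem mul_strict_mono (x₁ x₂ y₁ y₂ : PGame)
    (hx₁ : x₁.Numeric) (hx₂ : x₂.Numeric) (hy₁ : y₁.Numeric) (hy₂ : y₂.Numeric)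
    (hx : x₁ < x₂) (hy : y₁ < y₂) :
    (x₁ * y₂ + x₂ * y₁ < x₁ * y₁ + x₂ * y₂) ∧
    (∀ y : PGame, y.Numeric → 0 < y → x₁ * y < x₂ * y) := by
  refine ⟨(crossDiff_pos_iff _ _ _ _).1 (crossDiff_pos hx₁ hx₂ hy₁ hy₂ hx hy), fun y hy hpos => ?_⟩
  have h := crossDiff_pos hx₁ hx₂ numeric_zero hy hx hpos
  rw [crossDiff_zero_left, sub_pos] at h
  exact Game.mk_lt_mk.1 h
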